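/- For every natural number n, the group G acts transitively on the n-th layer of the binary rooted tree: for any two binary words v, w of length n there exists g ∈ G with g(v) = w. -/

import Mathlib

-- The generators `a` and `b` of the iterated monodromy group of `z^2-1`,
-- as functions on binary words (`false` = x = left, `true` = y = right),
-- defined by mutual recursion.
mutual
def aFun : List Bool → List Bool
  | [] => []
  | false :: w => true :: bFun w
  | true :: w => false :: w

def bFun : List Bool → List Bool
  | [] => []
  | false :: w => false :: aFun w
  | true :: w => true :: w
end

-- The inverses of `aFun`/`bFun`.
mutual
def aInv : List Bool → List Bool
  | [] => []
  | true :: w => false :: bInv w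
  | false :: w => true :: w

def bInv : List Bool → List Bool
  | [] => []
  | false :: w => false :: aInv w
  | true :: w => true :: w
end

mutual
theorem aFun_aInv : ∀ w, aFun (aInv w) = w
  | [] => rfl
  | true :: w => by simp [aInv, aFun, bFun_bInv w]
  | false :: w => by simp [aInv, aFun]

theorem bFun_bInv : ∀ w, bFun (bInv w) = w
  | [] => rfl
  | false :: w => by simp [bInv, bFun, aFun_aInv w]
  | true :: w => by simp [bInv, bFun]
end

mutual
theorem aInv_aFun : ∀ w, aInv (aFun w) = w
  | [] => rfl
  | false :: w => by simp [aFun, aInv, bInv_bFun w]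
  | true :: w => by simp [aFun, aInv]

theorem bInv_bFun : ∀ w, bInv (bFun w) = w
  | [] => rfl
  | false :: w => by simp [bFun, bInv, aInv_aFun w]
  | true :: w => by simp [bFun, bInv]
end

/-- `a` as a permutation of the set of binary words. -/
def aPerm : Equiv.Perm (List Bool) := ⟨aFun, aInv, aInv_aFun, aFun_aInv⟩
/-- `b` as a permutation of the set of binary words. -/
def bPerm : Equiv.Perm (List Bool) := ⟨bFun, bInv, bInv_bFun, bFun_bInv⟩

mutual
theorem aFun_length : ∀ w, (aFun w).length = w.length
  | [] => rfl
  | false :: w => by simp [aFun, bFun_length w]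
  | true :: w => by simp [aFun]

theorem bFun_length : ∀ w, (bFun w).length = w.length
  | [] => rfl
  | false :: w => by simp [bFun, aFun_length w]
  | true :: w => by simp [bFun]
end

mutual
theorem aFun_prefix : ∀ u v, u <+: v → aFun u <+: aFun v
  | [], v, _ => by simp [aFun]
  | false :: u, false :: v, h => by
      simp only [List.cons_prefix_cons] at h
      simpa [aFun, List.cons_prefix_cons] using bFun_prefix u v h.2
  | true :: u, true :: v, h => by
      simp only [List.cons_prefix_cons] at h
      simpa [aFun, List.cons_prefix_cons] using h.2
  | false :: u, true :: v, h => by simp [List.cons_prefix_cons] at h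
  | true :: u, false :: v, h => by simp [List.cons_prefix_cons] at h
  | _ :: u, [], h => by simp at h

theorem bFun_prefix : ∀ u v, u <+: v → bFun u <+: bFun v
  | [], v, _ => by simp [bFun]
  | false :: u, false :: v, h => by
      simp only [List.cons_prefix_cons] at h
      simpa [bFun, List.cons_prefix_cons] using aFun_prefix u v h.2
  | true :: u, true :: v, h => by
      simp only [List.cons_prefix_cons] at h
      simpa [bFun, List.cons_prefix_cons] using h.2
  | false :: u, true :: v, h => by simp [List.cons_prefix_cons] at h
  | true :: u, false :: v, h => by simp [List.cons_prefix_cons] at h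
  | _ :: u, [], h => by simp at h
end

/-- The group of automorphisms of the binary rooted tree: bijections of the set of
binary words preserving word length and the prefix relation. -/
def treeAut : Subgroup (Equiv.Perm (List Bool)) where
  carrier := {f | (∀ w, (f w).length = w.length) ∧ ∀ u v : List Bool, u <+: v → f u <+: f v}
  one_mem' := ⟨fun _ => rfl, fun _ _ h => h⟩
  mul_mem' := by
    rintro f g ⟨hf1, hf2⟩ ⟨hg1, hg2⟩
    exact ⟨fun w => (hf1 _).trans (hg1 w), fun u v h => hf2 _ _ (hg2 _ _ h)⟩
  inv_mem' := by
    rintro f ⟨hf1, hf2⟩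
    constructor
    · intro w
      have := hf1 (f⁻¹ w)
      simpa using this.symm
    · intro u v h
      have hlen : (f⁻¹ u).length ≤ (f⁻¹ v).length := by
        have h1 : (f⁻¹ u).length = u.length := by have := hf1 (f⁻¹ u); simpa using this.symm
        have h2 : (f⁻¹ v).length = v.length := by have := hf1 (f⁻¹ v); simpa using this.symm
        rw [h1, h2]; exact h.length_le
      set p := (f⁻¹ v).take (f⁻¹ u).length with hp
      have hpv : p <+: f⁻¹ v := List.take_prefix _ _
      have hplen : p.length = (f⁻¹ u).length := by
        simp only [hp, List.length_take]; omega
      have hfp : f p <+: v := by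
        have := hf2 _ _ hpv
        simpa using this
      have hfplen : (f p).length = u.length := by
        rw [hf1 p, hplen]
        have := hf1 (f⁻¹ u); simpa using this.symm
      have : f p = u := by
        rcases List.prefix_or_prefix_of_prefix hfp h with h' | h'
        · exact h'.eq_of_length hfplen
        · exact (h'.eq_of_length hfplen.symm).symm
      have : p = f⁻¹ u := by
        have := congrArg (f⁻¹ : Equiv.Perm (List Bool)) this
        simpa using this
      rw [← this]; exact hpv

/-- The generator `a` as a tree automorphism. -/
def A : treeAut := ⟨aPerm, aFun_length, aFun_prefix⟩
/-- The generator `b` as a tree automorphism. -/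
def B : treeAut := ⟨bPerm, bFun_length, bFun_prefix⟩

/-- The iterated monodromy group of `z ↦ z² - 1`: the subgroup of the automorphism
group of the binary rooted tree generated by `a` and `b`. -/
def G : Subgroup treeAut := Subgroup.closure {A, B}

/-- Apply a tree automorphism to a binary word. -/
def app (g : treeAut) (w : List Bool) : List Bool := g.val w


theorem app_mul (g h : treeAut) (u : List Bool) : app (g * h) u = app g (app h u) := rfl

theorem A_mem : A ∈ G := Subgroup.subset_closure (by simp)
theorem B_mem : B ∈ G := Subgroup.subset_closure (by simp)

theorem app_A (u : List Bool) : app A u = aFun u := rfl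
theorem app_B (u : List Bool) : app B u = bFun u := rfl
theorem app_Ainv (u : List Bool) : app A⁻¹ u = aInv u := rfl

theorem lift_lemma (g : treeAut) (hg : g ∈ G) :
    (∃ h, h ∈ G ∧ ∀ u, app h (false :: u) = false :: app g u) ∧
    (∃ h, h ∈ G ∧ ∀ u, app h (true :: u) = true :: app g u) := by
  induction hg using Subgroup.closure_induction with
  | mem x hx =>
    rcases hx with rfl | rfl
    · constructor
      · exact ⟨B, B_mem, fun u => by simp [app_B, bFun, app_A]⟩
      · refine ⟨A⁻¹ * B * A, by
          exact mul_mem (mul_mem (inv_mem A_mem) B_mem) A_mem, fun u => ?_⟩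
        simp [app_mul, app_A, app_B, app_Ainv, aFun, bFun, aInv]
    · constructor
      · exact ⟨A * A, mul_mem A_mem A_mem, fun u => by
          simp [app_mul, app_A, aFun, app_B]⟩
      · exact ⟨A * A, mul_mem A_mem A_mem, fun u => by
          simp [app_mul, app_A, aFun, app_B]⟩
  | one =>
    exact ⟨⟨1, one_mem _, fun u => rfl⟩, ⟨1, one_mem _, fun u => rfl⟩⟩
  | mul x y hx hy ihx ihy =>
    obtain ⟨⟨h1, h1G, h1p⟩, ⟨h2, h2G, h2p⟩⟩ := ihx
    obtain ⟨⟨k1, k1G, k1p⟩, ⟨k2, k2G, k2p⟩⟩ := ihy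
    exact ⟨⟨h1 * k1, mul_mem h1G k1G, fun u => by
        simp [app_mul, k1p, h1p]⟩,
      ⟨h2 * k2, mul_mem h2G k2G, fun u => by
        simp [app_mul, k2p, h2p]⟩⟩
  | inv x hx ih =>
    obtain ⟨⟨h1, h1G, h1p⟩, ⟨h2, h2G, h2p⟩⟩ := ih
    refine ⟨⟨h1⁻¹, inv_mem h1G, fun u => ?_⟩, ⟨h2⁻¹, inv_mem h2G, fun u => ?_⟩⟩
    · have := h1p (app x⁻¹ u)
      have h2' : app x (app x⁻¹ u) = u := by
        simp [app]
      rw [h2'] at this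
      have := congrArg (app h1⁻¹) this.symm
      simpa [app] using this
    · have := h2p (app x⁻¹ u)
      have h2' : app x (app x⁻¹ u) = u := by
        simp [app]
      rw [h2'] at this
      have := congrArg (app h2⁻¹) this.symm
      simpa [app] using this

/-- `G` acts transitively on every layer of the binary rooted tree:
for any two binary words `v`, `w` of the same length `n`, some `g ∈ G` maps `v` to `w`. -/
theorem G_level_transitive (n : ℕ) (v w : List Bool) (hv : v.length = n) (hw : w.length = n) :
    ∃ g : treeAut, g ∈ G ∧ app g v = w := by
  induction n generalizing v w with
  | zero =>
    rw [List.length_eq_zero_iff] at hv hw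
    subst hv; subst hw
    exact ⟨1, one_mem _, rfl⟩
  | succ n ih =>
    match v, w with
    | c :: v', d :: w' =>
      simp only [List.length_cons, Nat.add_right_cancel_iff] at hv hw
      match c, d with
      | false, false =>
        obtain ⟨g, hg, hgp⟩ := ih v' w' hv hw
        obtain ⟨⟨h, hG, hp⟩, _⟩ := lift_lemma g hg
        exact ⟨h, hG, by rw [hp, hgp]⟩
      | true, true =>
        obtain ⟨g, hg, hgp⟩ := ih v' w' hv hw
        obtain ⟨_, ⟨h, hG, hp⟩⟩ := lift_lemma g hg
        exact ⟨h, hG, by rw [hp, hgp]⟩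
      | false, true =>
        obtain ⟨g, hg, hgp⟩ := ih (bFun v') w' (by rw [bFun_length]; exact hv) hw
        obtain ⟨_, ⟨h, hG, hp⟩⟩ := lift_lemma g hg
        refine ⟨h * A, mul_mem hG A_mem, ?_⟩
        rw [app_mul, app_A]
        show app h (true :: bFun v') = true :: w'
        rw [hp, hgp]
      | true, false =>
        obtain ⟨g, hg, hgp⟩ := ih v' w' hv hw
        obtain ⟨⟨h, hG, hp⟩, _⟩ := lift_lemma g hg
        refine ⟨h * A, mul_mem hG A_mem, ?_⟩
        rw [app_mul, app_A]
        show app h (false :: v') = false :: w'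
        rw [hp, hgp]
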